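/- If n is a composite positive integer and p is the smallest prime divisor of n, then T(n) < 1 + T(n−1) + (2⌊√n⌋ − 2)·T(n/p − 1). -/

import Mathlib

/-- `f (a₁,…,a_k)` defined by `f(a₁) = a₁`, `f(a₁,…,a_{i+1}) = (f(a₁,…,a_i) + 1) · a_{i+1}`. -/
def f (l : List ℕ) : ℕ := l.foldl (fun acc a => (acc + 1) * a) 0

/-- `T n` is the number of nonempty finite sequences of positive integers with `f A = n`,
with the additional convention `T 0 = 1`. -/
noncomputable def T : ℕ → ℕ
  | 0 => 1
  | n + 1 => Nat.card {l : List ℕ // l ≠ [] ∧ (∀ a ∈ l, 0 < a) ∧ f l = n + 1}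

/-!
Splitting off the last entry `d` of a sequence `A = A' ++ [d]` with `f A = n` gives
`(f A' + 1) * d = n`, so `T n = ∑_{d ∣ n} T (n / d - 1)` for `n ≥ 1`, the term `d = n` counting
`A = [n]` through `T 0 = 1`. In particular `T` is monotone and strictly increasing from `1` on.
For composite `n` the terms `d = 1` and `d = n` give `T (n - 1)` and `1`; every other divisor is
at least `p = minFac n`, so its term is at most `T (n / p - 1)`, and there are at most
`2⌊√n⌋ - 2` of them, because `d ↦ n / d` pairs divisors above and below `√n`. The inequality is
strict: if `n = p²` the only such divisor is `p`, and otherwise the term `d = n / p` is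
`T (p - 1) < T (n / p - 1)`.
-/

open Finset

/-- The empty list is the only positive sequence with `f = 0`, so the convention `T 0 = 1` makes
`T n = Nat.card (fPreimage n)` hold for every `n`. -/
def fPreimage (n : ℕ) : Set (List ℕ) := {l | (∀ a ∈ l, 0 < a) ∧ f l = n}

@[simp]
lemma f_nil : f [] = 0 := rfl

lemma f_append_singleton (l : List ℕ) (a : ℕ) : f (l ++ [a]) = (f l + 1) * a := by
  simp [f, List.foldl_append]

lemma append_singleton_mem_fPreimage_iff {n d : ℕ} {B : List ℕ} :
    B ++ [d] ∈ fPreimage n ↔ d ∈ n.divisors ∧ B ∈ fPreimage (n / d - 1) := by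
  simp only [fPreimage, Set.mem_ofPred_eq, List.mem_append, List.mem_singleton,
    Nat.mem_divisors, f_append_singleton]
  constructor
  · rintro ⟨hpos, rfl⟩
    have hd : 0 < d := hpos d (Or.inr rfl)
    refine ⟨⟨dvd_mul_left _ _, by positivity⟩, fun a ha => hpos a (Or.inl ha), ?_⟩
    rw [Nat.mul_div_cancel _ hd, Nat.add_sub_cancel]
  · rintro ⟨⟨⟨k, rfl⟩, hn⟩, hpos, hB⟩
    have hd : 0 < d := Nat.pos_of_ne_zero (by rintro rfl; simp at hn)
    have hk : 0 < k := Nat.pos_of_ne_zero (by rintro rfl; simp at hn)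
    rw [Nat.mul_div_cancel_left _ hd] at hB
    refine ⟨fun a ha => ha.elim (hpos a) (· ▸ hd), ?_⟩
    rw [hB, Nat.sub_add_cancel hk, mul_comm]

lemma fPreimage_zero : fPreimage 0 = {[]} := by
  ext l
  rcases l.eq_nil_or_concat' with rfl | ⟨B, d, rfl⟩
  · simp [fPreimage]
  · simp [append_singleton_mem_fPreimage_iff]

def snocDivisor (n : ℕ) : (Σ d : n.divisors, fPreimage (n / d - 1)) → fPreimage n :=
  fun x => ⟨(x.2 : List ℕ) ++ [(x.1 : ℕ)], append_singleton_mem_fPreimage_iff.2 ⟨x.1.2, x.2.2⟩⟩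

lemma snocDivisor_bijective {n : ℕ} (hn : n ≠ 0) : Function.Bijective (snocDivisor n) := by
  constructor
  · rintro ⟨⟨d, hd⟩, ⟨B, hB⟩⟩ ⟨⟨d', hd'⟩, ⟨B', hB'⟩⟩ h
    obtain ⟨rfl, h⟩ := List.append_inj' (Subtype.ext_iff.1 h) rfl
    cases List.singleton_inj.1 h
    rfl
  · rintro ⟨l, hl⟩
    rcases l.eq_nil_or_concat' with rfl | ⟨B, d, rfl⟩
    · exact absurd hl.2.symm hn
    · obtain ⟨hd, hB⟩ := append_singleton_mem_fPreimage_iff.1 hl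
      exact ⟨⟨⟨d, hd⟩, ⟨B, hB⟩⟩, rfl⟩

instance finite_fPreimage (n : ℕ) : Finite (fPreimage n) := by
  induction n using Nat.strong_induction_on with
  | _ n ih =>
    rcases eq_or_ne n 0 with rfl | hn
    · rw [fPreimage_zero]
      infer_instance
    · have (d : n.divisors) : Finite (fPreimage (n / d - 1)) :=
        ih _ (by have := Nat.div_le_self n d; omega)
      exact Finite.of_surjective _ (snocDivisor_bijective hn).2

lemma T_eq_card_fPreimage (n : ℕ) : T n = Nat.card (fPreimage n) := by
  cases n with
  | zero => simp [T, fPreimage_zero]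
  | succ n =>
    refine Nat.card_congr (Equiv.subtypeEquivRight fun l => ⟨fun h => h.2, fun h => ⟨?_, h⟩⟩)
    rintro rfl
    exact absurd h.2 (by simp)

theorem T_eq_sum_divisors {n : ℕ} (hn : n ≠ 0) : T n = ∑ d ∈ n.divisors, T (n / d - 1) := by
  simp only [T_eq_card_fPreimage,
    ← Nat.card_congr (Equiv.ofBijective _ (snocDivisor_bijective hn)), Nat.card_sigma]
  exact sum_coe_sort n.divisors fun d => Nat.card (fPreimage (n / d - 1))

lemma T_mono : Monotone T := by
  refine monotone_nat_of_le_succ fun n => ?_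
  rw [T_eq_sum_divisors n.succ_ne_zero]
  simpa using single_le_sum (f := fun d => T ((n + 1) / d - 1)) (fun _ _ => Nat.zero_le _)
    (Nat.one_mem_divisors.2 n.succ_ne_zero)

lemma T_lt_T_succ {n : ℕ} (hn : n ≠ 0) : T n < T (n + 1) := by
  have hsub : ({1, n + 1} : Finset ℕ) ⊆ (n + 1).divisors := by
    simp [insert_subset_iff]
  rw [T_eq_sum_divisors n.succ_ne_zero]
  calc T n < T n + T 0 := by simp [T]
    _ = ∑ d ∈ {1, n + 1}, T ((n + 1) / d - 1) := by
      rw [sum_pair (by omega)]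
      simp
    _ ≤ _ := sum_le_sum_of_subset hsub

theorem Nat.card_divisors_le_two_mul_sqrt (n : ℕ) : #n.divisors ≤ 2 * n.sqrt := by
  set s := n.sqrt
  have hsmall : #(n.divisors.filter (· ≤ s)) ≤ s := by
    calc _ ≤ #(Icc 1 s) := card_le_card fun d hd => by
            simp only [mem_filter, Nat.mem_divisors] at hd
            exact mem_Icc.2 ⟨Nat.pos_of_dvd_of_pos hd.1.1 (Nat.pos_of_ne_zero hd.1.2), hd.2⟩
      _ = s := by simp
  -- `d ↦ n / d` sends the divisors above `√n` injectively to divisors at most `√n`.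
  have hlarge : #(n.divisors.filter (¬ · ≤ s)) ≤ s := by
    calc _ ≤ #(Icc 1 s) := card_le_card_of_injOn (n / ·) (fun d hd => by
            simp only [mem_coe, mem_filter, Nat.mem_divisors, not_le] at hd
            obtain ⟨⟨hdn, hn⟩, hsd⟩ := hd
            have hd : 0 < d := Nat.pos_of_dvd_of_pos hdn (Nat.pos_of_ne_zero hn)
            refine mem_Icc.2 ⟨Nat.div_pos (Nat.le_of_dvd (Nat.pos_of_ne_zero hn) hdn) hd, ?_⟩
            refine Nat.lt_succ_iff.1 ((Nat.div_lt_iff_lt_mul hd).2 ?_)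
            calc n < (s + 1) * (s + 1) := Nat.lt_succ_sqrt n
              _ ≤ (s + 1) * d := Nat.mul_le_mul_left _ hsd)
          (fun d hd e he h => by
            simp only [coe_filter, Set.mem_ofPred_eq, Nat.mem_divisors] at hd he
            rw [← Nat.div_div_self hd.1.1 hd.1.2, ← Nat.div_div_self he.1.1 he.1.2]
            exact congrArg (n / ·) h)
      _ = s := by simp
  rw [← card_filter_add_card_filter_not (· ≤ s)]
  omega

lemma card_properDivisors_erase_one_le (n : ℕ) :
    #(n.properDivisors.erase 1) ≤ 2 * n.sqrt - 2 := by
  rcases Nat.lt_or_ge n 2 with hn | hn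
  · interval_cases n <;> simp
  have h := Nat.card_divisors_le_two_mul_sqrt n
  rw [← Nat.cons_self_properDivisors (by omega), card_cons] at h
  rw [card_erase_of_mem (Nat.one_mem_properDivisors_iff_one_lt.2 hn)]
  omega

lemma T_eq_one_add_T_pred_add_sum {n : ℕ} (hn : 1 < n) :
    T n = 1 + T (n - 1) + ∑ d ∈ n.properDivisors.erase 1, T (n / d - 1) := by
  rw [T_eq_sum_divisors (by omega), ← Nat.cons_self_properDivisors (by omega), sum_cons,
    ← add_sum_erase _ _ (Nat.one_mem_properDivisors_iff_one_lt.2 hn), Nat.div_self (by omega),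
    Nat.div_one]
  simp only [Nat.sub_self, T]
  ring

lemma sum_T_properDivisors_erase_one_lt {n : ℕ} (hn : 1 < n) (hcomp : ¬ n.Prime) :
    ∑ d ∈ n.properDivisors.erase 1, T (n / d - 1) < (2 * n.sqrt - 2) * T (n / n.minFac - 1) := by
  set p := n.minFac
  set D := n.properDivisors.erase 1
  have hp : p.Prime := Nat.minFac_prime hn.ne'
  have hp2 := hp.two_le
  have hpp : p * p ≤ n := by simpa [sq] using Nat.minFac_sq_le_self (by omega) hcomp
  have hpq : p ≤ n / p := (Nat.le_div_iff_mul_le hp.pos).2 hpp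
  have hterm : ∀ d ∈ D, T (n / d - 1) ≤ T (n / p - 1) := fun d hd => by
    simp only [D, mem_erase, Nat.mem_properDivisors] at hd
    have hd0 : 0 < d := Nat.pos_of_dvd_of_pos hd.2.1 (by omega)
    have hpd : p ≤ d := Nat.minFac_le_of_dvd (by omega) hd.2.1
    exact T_mono (Nat.sub_le_sub_right (Nat.div_le_div_left hpd hp.pos) 1)
  have hcard := card_properDivisors_erase_one_le n
  have hsqrt : 2 ≤ n.sqrt := Nat.le_sqrt.2 (by nlinarith)
  rcases hpq.eq_or_lt with hsq | hlt
  · have hnp : n = p ^ 2 := by rw [← Nat.div_mul_cancel (Nat.minFac_dvd n), ← hsq, sq]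
    have hD : D = {p} := by
      simp [D, hnp, Nat.properDivisors_prime_pow hp, range_add_one, erase_insert_of_ne hp.ne_one]
    have hpos : 0 < T (p - 1) := T_mono (Nat.zero_le _)
    rw [hD, sum_singleton, ← hsq]
    calc T (p - 1) < 2 * T (p - 1) := by omega
      _ ≤ (2 * n.sqrt - 2) * T (p - 1) := Nat.mul_le_mul_right _ (by omega)
  · have hqD : n / p ∈ D := by
      simp only [D, mem_erase, Nat.mem_properDivisors]
      exact ⟨by omega, Nat.div_dvd_of_dvd (Nat.minFac_dvd n), Nat.div_lt_self (by omega) hp.one_lt⟩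
    have hstrict : T (n / (n / p) - 1) < T (n / p - 1) := by
      rw [Nat.div_div_self (Nat.minFac_dvd n) (by omega)]
      calc T (p - 1) < T (p - 1 + 1) := T_lt_T_succ (by omega)
        _ ≤ T (n / p - 1) := T_mono (by omega)
    calc ∑ d ∈ D, T (n / d - 1) < ∑ _d ∈ D, T (n / p - 1) := sum_lt_sum hterm ⟨_, hqD, hstrict⟩
      _ = #D * T (n / p - 1) := by rw [sum_const, smul_eq_mul]
      _ ≤ (2 * n.sqrt - 2) * T (n / p - 1) := Nat.mul_le_mul_right _ hcard

theorem T_composite_lt (n : ℕ) (hn : 1 < n) (hcomp : ¬ n.Prime) :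
    T n < 1 + T (n - 1) + (2 * Nat.sqrt n - 2) * T (n / n.minFac - 1) := by
  rw [T_eq_one_add_T_pred_add_sum hn]
  have := sum_T_properDivisors_erase_one_lt hn hcomp
  omega
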